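/- Let D(λ) = A^{-q} ∏_{j=1}^q (λ - λ_j) with λ_j ∈ [-c, c] real, A > 0, and suppose at a point λ₊ ∈ [-c, c] (lying between min λ_j and max λ_j) one has |D(λ₊)| ≥ 2. Then h₊ := (1/q) arccosh(|D(λ₊)|/2) satisfies h₊ < ln( (c + |q^{-1}∑_j λ_j| ) / A ) ≤ ln(2c/A). -/

import Mathlib

/-! AM-GM bounds `|∏ (λ₊ - λ_j)|` by the `q`-th power of the mean of the `|λ₊ - λ_j|`. Since
`t ↦ ∑ |t - λ_j|` is convex, on `[-c, c]` it is at most its larger endpoint value `qc + |∑ λ_j|`.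
Hence `|D(λ₊)| ≤ ((c + |q⁻¹ ∑ λ_j|)/A)^q`, and `arcosh (t/2) < log t` turns this into the bound
on `h₊`. -/

open Finset Real

lemma prod_le_arith_mean_pow {ι : Type*} {s : Finset ι} (hs : s.Nonempty) {z : ι → ℝ}
    (hz : ∀ i ∈ s, 0 ≤ z i) : ∏ i ∈ s, z i ≤ ((∑ i ∈ s, z i) / #s) ^ #s := by
  have hn : (0 : ℝ) < #s := by exact_mod_cast hs.card_pos
  have hgm : ∏ i ∈ s, z i ^ (#s : ℝ)⁻¹ ≤ (∑ i ∈ s, z i) / #s := by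
    have := geom_mean_le_arith_mean_weighted s (fun _ => (#s : ℝ)⁻¹) z
      (fun _ _ => by positivity) (by simp [hn.ne']) hz
    rwa [← mul_sum, inv_mul_eq_div] at this
  calc ∏ i ∈ s, z i = (∏ i ∈ s, z i ^ (#s : ℝ)⁻¹) ^ #s := by
        rw [← prod_pow]
        refine prod_congr rfl fun i hi => ?_
        rw [← rpow_natCast, ← rpow_mul (hz i hi), inv_mul_cancel₀ hn.ne', rpow_one]
    _ ≤ _ := pow_le_pow_left₀ (prod_nonneg fun i hi => rpow_nonneg (hz i hi) _) hgm _

/-- The right side interpolates linearly in `x` between the values `c * |±c - y| = c ^ 2 ∓ c * y`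
at the endpoints, which is where convexity of `|· - y|` enters. -/
lemma mul_abs_sub_le_sq_sub_mul {c x y : ℝ} (hx : x ∈ Set.Icc (-c) c) (hy : y ∈ Set.Icc (-c) c) :
    c * |x - y| ≤ c ^ 2 - x * y := by
  obtain ⟨hx₁, hx₂⟩ := hx
  obtain ⟨hy₁, hy₂⟩ := hy
  rcases abs_cases (x - y) with ⟨h, -⟩ | ⟨h, -⟩ <;> rw [h]
  · nlinarith [mul_nonneg (sub_nonneg.2 hx₂) (neg_le_iff_add_nonneg.1 hy₁)]
  · nlinarith [mul_nonneg (neg_le_iff_add_nonneg.1 hx₁) (sub_nonneg.2 hy₂)]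

lemma sum_abs_sub_le {ι : Type*} (s : Finset ι) {c x : ℝ} (hc : 0 < c) (hx : x ∈ Set.Icc (-c) c)
    {lam : ι → ℝ} (hlam : ∀ j ∈ s, lam j ∈ Set.Icc (-c) c) :
    ∑ j ∈ s, |x - lam j| ≤ #s * c + |∑ j ∈ s, lam j| := by
  refine le_of_mul_le_mul_left ?_ hc
  calc c * ∑ j ∈ s, |x - lam j| ≤ ∑ j ∈ s, (c ^ 2 - x * lam j) := by
        rw [mul_sum]
        exact sum_le_sum fun j hj => mul_abs_sub_le_sq_sub_mul hx (hlam j hj)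
    _ = #s * c ^ 2 + -x * ∑ j ∈ s, lam j := by
        rw [sum_sub_distrib, sum_const, nsmul_eq_mul, ← mul_sum]; ring
    _ ≤ #s * c ^ 2 + c * |∑ j ∈ s, lam j| := by
        gcongr #s * c ^ 2 + ?_
        calc -x * ∑ j ∈ s, lam j ≤ |x| * |∑ j ∈ s, lam j| := by
              rw [← abs_neg x, ← abs_mul]; exact le_abs_self _
          _ ≤ c * |∑ j ∈ s, lam j| := by gcongr; exact abs_le.2 hx
    _ = c * (#s * c + |∑ j ∈ s, lam j|) := by ring

lemma abs_sum_le_card_mul {ι : Type*} {s : Finset ι} {c : ℝ} {lam : ι → ℝ}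
    (hlam : ∀ j ∈ s, lam j ∈ Set.Icc (-c) c) : |∑ j ∈ s, lam j| ≤ #s * c :=
  (abs_sum_le_sum_abs _ _).trans <| by
    simpa using sum_le_card_nsmul s _ c fun j hj => abs_le.2 (hlam j hj)

lemma abs_prod_sub_le {ι : Type*} {s : Finset ι} (hs : s.Nonempty) {c x : ℝ} (hc : 0 < c)
    (hx : x ∈ Set.Icc (-c) c) {lam : ι → ℝ} (hlam : ∀ j ∈ s, lam j ∈ Set.Icc (-c) c) :
    |∏ j ∈ s, (x - lam j)| ≤ (c + |(#s : ℝ)⁻¹ * ∑ j ∈ s, lam j|) ^ #s := by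
  have hn : (0 : ℝ) < #s := by exact_mod_cast hs.card_pos
  rw [abs_prod]
  refine (prod_le_arith_mean_pow hs fun j _ => abs_nonneg _).trans (pow_le_pow_left₀ ?_ ?_ _)
  · positivity
  · rw [abs_mul, abs_inv, Nat.abs_cast, div_le_iff₀ hn]
    calc ∑ j ∈ s, |x - lam j| ≤ #s * c + |∑ j ∈ s, lam j| := sum_abs_sub_le s hc hx hlam
      _ = (c + (#s : ℝ)⁻¹ * |∑ j ∈ s, lam j|) * #s := by field_simp

lemma arcosh_half_lt_log {t : ℝ} (ht : 0 < t) : arcosh (t / 2) < log t := by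
  have hsqrt : √((t / 2) ^ 2 - 1) < t / 2 :=
    (sqrt_lt' (by positivity)).2 (by linarith)
  exact log_lt_log (by positivity) (by linarith)

theorem stmt_16_general (q : ℕ) (hq : 1 ≤ q) (c A : ℝ) (hc : 0 < c) (hA : 0 < A)
    (lam : Fin q → ℝ) (hlam : ∀ j, lam j ∈ Set.Icc (-c) c)
    (x : ℝ) (hx : x ∈ Set.Icc (-c) c)
    (D hp : ℝ) (hD : D = (A ^ q)⁻¹ * ∏ j, (x - lam j)) (hD2 : 2 ≤ |D|)
    (hhp : hp = (1 / q) * Real.log (|D| / 2 + Real.sqrt ((|D| / 2) ^ 2 - 1))) :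
    hp < Real.log ((c + |(q : ℝ)⁻¹ * ∑ j, lam j|) / A) ∧
      Real.log ((c + |(q : ℝ)⁻¹ * ∑ j, lam j|) / A) ≤ Real.log (2 * c / A) := by
  set B := c + |(q : ℝ)⁻¹ * ∑ j, lam j|
  have hq₀ : (0 : ℝ) < q := by exact_mod_cast hq
  have hB : 0 < B := by positivity
  have hDB : |D| ≤ (B / A) ^ q := by
    have := abs_prod_sub_le (univ_nonempty_iff.2 ⟨⟨0, hq⟩⟩) hc hx fun j _ => hlam j
    rw [card_univ, Fintype.card_fin] at this
    rw [hD, abs_mul, abs_inv, abs_of_pos (by positivity), div_pow, div_eq_inv_mul]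
    gcongr
  refine ⟨?_, ?_⟩
  · calc hp = (1 / q) * arcosh (|D| / 2) := hhp
      _ < (1 / q) * log |D| := by gcongr; exact arcosh_half_lt_log (by linarith)
      _ ≤ (1 / q) * log ((B / A) ^ q) := by gcongr
      _ = log (B / A) := by rw [log_pow]; field_simp
  · have hmean : |(q : ℝ)⁻¹ * ∑ j, lam j| ≤ c := by
      rw [abs_mul, abs_inv, Nat.abs_cast, inv_mul_le_iff₀ hq₀]
      simpa using abs_sum_le_card_mul (s := univ) fun j _ => hlam j
    gcongr
    linarith

/-- Bound for the maximum of the Lyapunov exponent: if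
`D(λ) = A^{-q} ∏ (λ - λ_j)` with all `λ_j ∈ [-c, c]`, and at a point
`λ₊ ∈ [-c, c]` lying between `min λ_j` and `max λ_j` one has `|D(λ₊)| ≥ 2`,
then `h₊ = (1/q) arccosh(|D(λ₊)|/2)` satisfies
`h₊ < log ((c + |q⁻¹ ∑ λ_j|)/A) ≤ log (2c/A)`. -/
theorem stmt_16 (q : ℕ) (hq : 1 ≤ q) (c A : ℝ) (hc : 0 < c) (hA : 0 < A)
    (lam : Fin q → ℝ) (hlam : ∀ j, lam j ∈ Set.Icc (-c) c)
    (hne : (Finset.univ : Finset (Fin q)).Nonempty)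
    (x : ℝ) (hx : x ∈ Set.Icc (-c) c)
    (hx' : Finset.inf' Finset.univ hne lam ≤ x ∧ x ≤ Finset.sup' Finset.univ hne lam)
    (D hp : ℝ) (hD : D = (A ^ q)⁻¹ * ∏ j, (x - lam j)) (hD2 : 2 ≤ |D|)
    (hhp : hp = (1 / q) * Real.log (|D| / 2 + Real.sqrt ((|D| / 2) ^ 2 - 1))) :
    hp < Real.log ((c + |(q : ℝ)⁻¹ * ∑ j, lam j|) / A) ∧
      Real.log ((c + |(q : ℝ)⁻¹ * ∑ j, lam j|) / A) ≤ Real.log (2 * c / A) :=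
  stmt_16_general q hq c A hc hA lam hlam x hx D hp hD hD2 hhp
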